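/- Let σ be a non-attacking filling of μ and ^πσ the filling of π(μ) defined by hat(^πσ)(π(u)) = π(σ̂(u)) for all u in the augmented diagram of μ (where π on values maps i ↦ i+1 for i < n and n ↦ 1). Then coinv(hat(^πσ)) = coinv(σ̂) and maj(hat(^πσ)) = maj(σ̂) + μ_n − |σ^{−1}({n})|. -/

import Mathlib

open Finset

noncomputable section
attribute [local instance] Classical.propDecidable

/-- `u` lies in the column diagram of the composition `μ` (columns `1,…,n`). -/
def dgIn (n : ℕ) (μ : ℕ → ℕ) (u : ℕ × ℕ) : Prop :=
  1 ≤ u.1 ∧ u.1 ≤ n ∧ 1 ≤ u.2 ∧ u.2 ≤ μ u.1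

/-- `u` lies in the augmented diagram of `μ` (row `0` added). -/
def augIn (n : ℕ) (μ : ℕ → ℕ) (u : ℕ × ℕ) : Prop :=
  1 ≤ u.1 ∧ u.1 ≤ n ∧ u.2 ≤ μ u.1

/-- The column diagram of `μ` as a finite set. -/
def dgF (n : ℕ) (μ : ℕ → ℕ) : Finset (ℕ × ℕ) :=
  (Finset.Icc 1 n).biUnion (fun i => (Finset.Icc 1 (μ i)).image (fun j => (i, j)))

/-- The augmented diagram of `μ` as a finite set. -/
def augF (n : ℕ) (μ : ℕ → ℕ) : Finset (ℕ × ℕ) :=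
  (Finset.Icc 1 n).biUnion (fun i => (Finset.Icc 0 (μ i)).image (fun j => (i, j)))

/-- The box directly below `u`. -/
def dbox (u : ℕ × ℕ) : ℕ × ℕ := (u.1, u.2 - 1)

/-- `v` belongs to the arm of `u` (left arm or right arm). -/
def armIn (n : ℕ) (μ : ℕ → ℕ) (u v : ℕ × ℕ) : Prop :=
  (dgIn n μ v ∧ v.2 = u.2 ∧ v.1 < u.1 ∧ μ v.1 ≤ μ u.1) ∨
  (augIn n μ v ∧ v.2 + 1 = u.2 ∧ u.1 < v.1 ∧ μ v.1 < μ u.1)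

/-- The arm of `u` as a finite set. -/
def armF (n : ℕ) (μ : ℕ → ℕ) (u : ℕ × ℕ) : Finset (ℕ × ℕ) :=
  (augF n μ).filter (fun v => armIn n μ u v)

/-- The leg length `l(u) = μ_i - j`. -/
def legLen (μ : ℕ → ℕ) (u : ℕ × ℕ) : ℕ := μ u.1 - u.2

/-- The arm length `a(u) = |arm(u)|`. -/
def armLen (n : ℕ) (μ : ℕ → ℕ) (u : ℕ × ℕ) : ℕ := (armF n μ u).card

/-- Two distinct boxes attack each other: same row, or consecutive rows with
the lower box strictly to the right. -/
def attacks (u v : ℕ × ℕ) : Prop :=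
  u ≠ v ∧ (u.2 = v.2 ∨ (u.2 = v.2 + 1 ∧ u.1 < v.1) ∨ (v.2 = u.2 + 1 ∧ v.1 < u.1))

/-- Reading order: rows top to bottom, right to left within a row. -/
def rlt (u v : ℕ × ℕ) : Prop := v.2 < u.2 ∨ (u.2 = v.2 ∧ v.1 < u.1)

/-- The augmented filling: value `i` in the row-0 box `(i,0)`. -/
def augOf (σ : ℕ × ℕ → ℕ) : ℕ × ℕ → ℕ := fun u => if u.2 = 0 then u.1 else σ u

/-- The (augmented) filling is non-attacking. -/
def NonAttacking (n : ℕ) (μ : ℕ → ℕ) (σh : ℕ × ℕ → ℕ) : Prop :=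
  ∀ u v : ℕ × ℕ, augIn n μ u → augIn n μ v → attacks u v → σh u ≠ σh v

/-- The set of inversions of an augmented filling: attacking pairs,
earlier box (in reading order) having the larger entry. -/
def invF (n : ℕ) (μ : ℕ → ℕ) (σh : ℕ × ℕ → ℕ) : Finset ((ℕ × ℕ) × (ℕ × ℕ)) :=
  ((augF n μ) ×ˢ (augF n μ)).filter
    (fun p => attacks p.1 p.2 ∧ rlt p.1 p.2 ∧ σh p.2 < σh p.1)

/-- The descent set of an augmented filling. -/
def desF (n : ℕ) (μ : ℕ → ℕ) (σh : ℕ × ℕ → ℕ) : Finset (ℕ × ℕ) :=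
  (dgF n μ).filter (fun u => σh (dbox u) < σh u)

/-- maj = sum of `l(u)+1` over descents. -/
def majStat (n : ℕ) (μ : ℕ → ℕ) (σh : ℕ × ℕ → ℕ) : ℕ :=
  ∑ u ∈ desF n μ σh, (legLen μ u + 1)

/-- `χ_{xy} = 1` iff the earlier box in reading order carries the larger entry. -/
def chi (σh : ℕ × ℕ → ℕ) (x y : ℕ × ℕ) : ℕ :=
  if (rlt x y ∧ σh y < σh x) ∨ (rlt y x ∧ σh x < σh y) then 1 else 0

/-- Triples `(u, v, d(u))`, encoded by the pair `(u, v)` with `v ∈ arm(u)`. -/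
def triplesF (n : ℕ) (μ : ℕ → ℕ) : Finset ((ℕ × ℕ) × (ℕ × ℕ)) :=
  ((dgF n μ) ×ˢ (augF n μ)).filter (fun p => armIn n μ p.1 p.2)

/-- Inversion triples: `χ_{uv} + χ_{vw} - χ_{uw} = 1` where `w = d(u)`. -/
def invTriplesF (n : ℕ) (μ : ℕ → ℕ) (σh : ℕ × ℕ → ℕ) : Finset ((ℕ × ℕ) × (ℕ × ℕ)) :=
  (triplesF n μ).filter
    (fun p => chi σh p.1 p.2 + chi σh p.2 (dbox p.1) = chi σh p.1 (dbox p.1) + 1)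

/-- Co-inversion triples: `χ_{uv} + χ_{vw} - χ_{uw} = 0` where `w = d(u)`. -/
def coinvTriplesF (n : ℕ) (μ : ℕ → ℕ) (σh : ℕ × ℕ → ℕ) : Finset ((ℕ × ℕ) × (ℕ × ℕ)) :=
  (triplesF n μ).filter
    (fun p => chi σh p.1 p.2 + chi σh p.2 (dbox p.1) = chi σh p.1 (dbox p.1))

/-- coinv = number of co-inversion triples. -/
def coinvStat (n : ℕ) (μ : ℕ → ℕ) (σh : ℕ × ℕ → ℕ) : ℕ := (coinvTriplesF n μ σh).card

/-- `σ` is a filling of `μ`, i.e. takes values in `[n]` on the diagram. -/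
def IsFilling (n : ℕ) (μ : ℕ → ℕ) (σ : ℕ × ℕ → ℕ) : Prop :=
  ∀ u : ℕ × ℕ, dgIn n μ u → 1 ≤ σ u ∧ σ u ≤ n

/-- `π` on compositions: `π(μ) = (μ_n+1, μ_1, …, μ_{n-1})`. -/
def piComp (n : ℕ) (μ : ℕ → ℕ) : ℕ → ℕ := fun i => if i = 1 then μ n + 1 else μ (i - 1)

/-- `π` on boxes: `(i,j) ↦ (i+1,j)` for `i < n`, `(n,j) ↦ (1,j+1)`. -/
def piBox (n : ℕ) (u : ℕ × ℕ) : ℕ × ℕ := if u.1 < n then (u.1 + 1, u.2) else (1, u.2 + 1)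

/-- `π` on values: `k ↦ k+1` for `k < n`, `n ↦ 1`. -/
def piVal (n k : ℕ) : ℕ := if k < n then k + 1 else 1


section Helpers

variable {n : ℕ} {μ : ℕ → ℕ}

lemma mem_augF {u : ℕ × ℕ} : u ∈ augF n μ ↔ augIn n μ u := by
  obtain ⟨i, j⟩ := u
  simp only [augF, augIn, Finset.mem_biUnion, Finset.mem_image, Finset.mem_Icc, Prod.mk.injEq]
  constructor
  · rintro ⟨a, ha, b, hb, rfl, rfl⟩; exact ⟨ha.1, ha.2, hb.2⟩
  · rintro ⟨h1, h2, h3⟩; exact ⟨i, ⟨h1, h2⟩, j, ⟨Nat.zero_le _, h3⟩, rfl, rfl⟩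

lemma mem_dgF {u : ℕ × ℕ} : u ∈ dgF n μ ↔ dgIn n μ u := by
  obtain ⟨i, j⟩ := u
  simp only [dgF, dgIn, Finset.mem_biUnion, Finset.mem_image, Finset.mem_Icc, Prod.mk.injEq]
  constructor
  · rintro ⟨a, ha, b, hb, rfl, rfl⟩; exact ⟨ha.1, ha.2, hb.1, hb.2⟩
  · rintro ⟨h1, h2, h3, h4⟩; exact ⟨i, ⟨h1, h2⟩, j, ⟨h3, h4⟩, rfl, rfl⟩

lemma dgIn.augIn {u : ℕ × ℕ} (h : dgIn n μ u) : augIn n μ u := ⟨h.1, h.2.1, h.2.2.2⟩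

lemma piComp_succ {i : ℕ} (hi : 1 ≤ i) : piComp n μ (i + 1) = μ i := by
  simp [piComp]; omega

lemma piComp_one : piComp n μ 1 = μ n + 1 := by simp [piComp]


lemma piBox_fst_pos {u : ℕ × ℕ} : 1 ≤ (piBox n u).1 := by
  simp only [piBox]; split_ifs <;> simp

lemma augIn_piBox {u : ℕ × ℕ} (h : augIn n μ u) : augIn n (piComp n μ) (piBox n u) := by
  obtain ⟨i, j⟩ := u
  simp only [augIn] at h ⊢
  obtain ⟨h1, h2, h3⟩ := h
  simp only [piBox]
  split_ifs with hlt
  · refine ⟨by omega, by omega, ?_⟩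
    simpa [piComp_succ h1] using h3
  · have : i = n := by omega
    subst this
    exact ⟨le_refl 1, by omega, by simp [piComp_one]; omega⟩

lemma dgIn_piBox {u : ℕ × ℕ} (h : dgIn n μ u) : dgIn n (piComp n μ) (piBox n u) := by
  obtain ⟨i, j⟩ := u
  simp only [dgIn] at h ⊢
  obtain ⟨h1, h2, h3, h4⟩ := h
  simp only [piBox]
  split_ifs with hlt
  · refine ⟨by omega, by omega, by omega, ?_⟩
    simpa [piComp_succ h1] using h4
  · have : i = n := by omega
    subst this
    exact ⟨le_refl 1, by omega, by omega, by simp [piComp_one]; omega⟩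

lemma piBox_inj {u v : ℕ × ℕ} (hu : 1 ≤ u.1 ∧ u.1 ≤ n) (hv : 1 ≤ v.1 ∧ v.1 ≤ n)
    (h : piBox n u = piBox n v) : u = v := by
  obtain ⟨i, j⟩ := u; obtain ⟨a, b⟩ := v
  simp only [piBox] at h
  simp only at hu hv
  split_ifs at h <;> simp only [Prod.mk.injEq] at h ⊢ <;> omega

lemma piBox_lt {i j : ℕ} (h : i < n) : piBox n (i, j) = (i + 1, j) := by
  simp [piBox, h]

lemma piBox_ge {i j : ℕ} (h : ¬ i < n) : piBox n (i, j) = (1, j + 1) := by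
  simp [piBox, h]

lemma piBox_surj {u' : ℕ × ℕ} (h : augIn n (piComp n μ) u') (hne : u' ≠ (1, 0)) :
    ∃ u : ℕ × ℕ, augIn n μ u ∧ piBox n u = u' := by
  obtain ⟨i, j⟩ := u'
  simp only [augIn] at h
  obtain ⟨h1, h2, h3⟩ := h
  by_cases hi : i = 1
  · subst hi
    rw [piComp_one] at h3
    have hj : j ≠ 0 := fun hj => hne (by simp [hj])
    refine ⟨(n, j - 1), ⟨by omega, le_refl n, show j - 1 ≤ μ n by omega⟩, ?_⟩
    rw [piBox_ge (lt_irrefl n), Prod.mk.injEq]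
    exact ⟨rfl, by omega⟩
  · refine ⟨(i - 1, j), ⟨by omega, by omega, ?_⟩, ?_⟩
    · have hr : i - 1 + 1 = i := by omega
      rw [← hr, piComp_succ (by omega)] at h3; exact h3
    · rw [piBox_lt (by omega), Prod.mk.injEq]
      exact ⟨by omega, rfl⟩

lemma rlt_piBox {u v : ℕ × ℕ} (hu : 1 ≤ u.1 ∧ u.1 ≤ n) (hv : 1 ≤ v.1 ∧ v.1 ≤ n) :
    rlt (piBox n u) (piBox n v) ↔ rlt u v := by
  obtain ⟨i, j⟩ := u; obtain ⟨a, b⟩ := v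
  simp only at hu hv
  simp only [piBox]
  split_ifs <;> simp only [rlt] <;> omega

lemma dbox_piBox {u : ℕ × ℕ} (h : 1 ≤ u.2) : dbox (piBox n u) = piBox n (dbox u) := by
  obtain ⟨i, j⟩ := u
  simp only at h
  simp only [piBox, dbox]
  split_ifs
  · exact (if_pos ‹i < n›).symm
  · refine Eq.trans ?_ (if_neg ‹¬ i < n›).symm
    rw [Prod.mk.injEq]
    exact ⟨rfl, by omega⟩

lemma legLen_piBox {u : ℕ × ℕ} (h1 : 1 ≤ u.1) (h2 : u.1 ≤ n) :
    legLen (piComp n μ) (piBox n u) = legLen μ u := by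
  obtain ⟨i, j⟩ := u
  simp only at h1 h2
  simp only [piBox, legLen]
  split_ifs with hlt
  · simp [piComp_succ h1]
  · have : i = n := by omega
    subst this
    simp [piComp_one]


lemma prodEq {α β : Type*} {p q : α × β} (h1 : p.1 = q.1) (h2 : p.2 = q.2) : p = q := by
  obtain ⟨a, b⟩ := p; obtain ⟨c, d⟩ := q; simp_all

lemma augIn_dbox {u : ℕ × ℕ} (hu : dgIn n μ u) : augIn n μ (dbox u) :=
  ⟨hu.1, hu.2.1, le_trans (Nat.sub_le _ _) hu.2.2.2⟩

lemma armIn_augIn {u v : ℕ × ℕ} (h : armIn n μ u v) : augIn n μ v := by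
  rcases h with ⟨h, _⟩ | ⟨h, _⟩
  · exact h.augIn
  · exact h

lemma armIn_attacks {u v : ℕ × ℕ} (hu : dgIn n μ u) (h : armIn n μ u v) :
    attacks u v ∧ attacks v (dbox u) := by
  simp only [armIn, dgIn, augIn] at h hu
  simp only [attacks, dbox, ne_eq, Prod.ext_iff, not_and]
  omega

lemma armIn_rlt {u v : ℕ × ℕ} (hu : dgIn n μ u) (h : armIn n μ u v) :
    rlt u v ∧ rlt v (dbox u) ∧ rlt u (dbox u) := by
  simp only [armIn, dgIn, augIn] at h hu
  simp only [rlt, dbox]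
  omega

lemma armIn_ne10 {u v : ℕ × ℕ} (hu : dgIn n μ u) (h : armIn n μ u v) : v ≠ (1, 0) := by
  rintro rfl
  simp only [armIn, dgIn, augIn] at h hu
  omega

lemma armIn_piBox {u v : ℕ × ℕ} (hu : dgIn n μ u) (hv : augIn n μ v) :
    armIn n (piComp n μ) (piBox n u) (piBox n v) ↔ armIn n μ u v := by
  obtain ⟨i, j⟩ := u; obtain ⟨a, b⟩ := v
  simp only [dgIn] at hu; simp only [augIn] at hv
  by_cases hi : i < n <;> by_cases ha : a < n
  · rw [piBox_lt hi, piBox_lt ha]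
    simp only [armIn, dgIn, augIn]
    rw [piComp_succ hu.1, piComp_succ hv.1]
    omega
  · rw [piBox_lt hi, piBox_ge ha]
    simp only [armIn, dgIn, augIn]
    rw [piComp_succ hu.1, piComp_one]
    have : a = n := by omega
    subst this
    omega
  · rw [piBox_ge hi, piBox_lt ha]
    simp only [armIn, dgIn, augIn]
    rw [piComp_succ hv.1, piComp_one]
    have : i = n := by omega
    subst this
    omega
  · rw [piBox_ge hi, piBox_ge ha]
    simp only [armIn, dgIn, augIn]
    rw [piComp_one]
    have h1 : i = n := by omega
    have h2 : a = n := by omega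
    subst h1; subst h2
    omega

lemma rlt_asymm {u v : ℕ × ℕ} (h : rlt u v) : ¬ rlt v u := by
  simp only [rlt] at h ⊢; omega

lemma chi_of_rlt {σh : ℕ × ℕ → ℕ} {x y : ℕ × ℕ} (h : rlt x y) :
    chi σh x y = if σh y < σh x then 1 else 0 := by
  unfold chi
  have h2 := rlt_asymm h
  by_cases hc : σh y < σh x
  · rw [if_pos hc, if_pos (Or.inl ⟨h, hc⟩)]
  · rw [if_neg hc, if_neg]
    rintro (⟨_, h'⟩ | ⟨h', _⟩)
    · exact hc h'
    · exact h2 h'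

lemma augOf_bound {σ : ℕ × ℕ → ℕ} (hσ : IsFilling n μ σ) {u : ℕ × ℕ} (h : augIn n μ u) :
    1 ≤ augOf σ u ∧ augOf σ u ≤ n := by
  unfold augOf
  split_ifs with h0
  · exact ⟨h.1, h.2.1⟩
  · exact hσ u ⟨h.1, h.2.1, by omega, h.2.2⟩

lemma piVal_cond {n x y z : ℕ} (hx : 1 ≤ x ∧ x ≤ n) (hy : 1 ≤ y ∧ y ≤ n) (hz : 1 ≤ z ∧ z ≤ n)
    (hxy : x ≠ y) (hyz : y ≠ z) :
    ((if piVal n y < piVal n x then 1 else 0) + (if piVal n z < piVal n y then 1 else 0) =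
      (if piVal n z < piVal n x then (1 : ℕ) else 0)) ↔
    ((if y < x then 1 else 0) + (if z < y then 1 else 0) = (if z < x then (1 : ℕ) else 0)) := by
  simp only [piVal]
  split_ifs <;>
    first
      | omega
      | tauto
      | (simp only [false_iff, iff_false, true_iff, iff_true]; omega)

lemma piBox_surj_dg {u' : ℕ × ℕ} (h : dgIn n (piComp n μ) u') (hne : u' ≠ (1, 1)) :
    ∃ u : ℕ × ℕ, dgIn n μ u ∧ piBox n u = u' := by
  obtain ⟨u, hu, rfl⟩ := piBox_surj h.augIn
    (fun heq => Nat.not_succ_le_zero 0 (by rw [heq] at h; exact h.2.2.1))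
  refine ⟨u, ⟨hu.1, hu.2.1, ?_, hu.2.2⟩, rfl⟩
  by_contra h0
  obtain ⟨i, j⟩ := u
  simp only [not_le] at h0
  have h0' : j = 0 := by omega
  subst h0'
  by_cases hi : i < n
  · rw [piBox_lt hi] at h
    exact absurd h.2.2.1 (by omega)
  · rw [piBox_ge hi] at hne
    exact hne rfl

lemma dgF_pi (hn : 1 ≤ n) :
    dgF n (piComp n μ) = insert (1, 1) ((dgF n μ).image (piBox n)) := by
  ext u'
  simp only [Finset.mem_insert, Finset.mem_image, mem_dgF]
  constructor
  · intro h
    by_cases h11 : u' = (1, 1)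
    · exact Or.inl h11
    · right
      obtain ⟨u, hu, rfl⟩ := piBox_surj_dg h h11
      exact ⟨u, hu, rfl⟩
  · rintro (rfl | ⟨u, hu, rfl⟩)
    · exact ⟨le_refl 1, hn, le_refl 1, by rw [show ((1:ℕ),(1:ℕ)).1 = 1 from rfl, piComp_one]; omega⟩
    · exact dgIn_piBox hu

lemma triple_equiv (hn : 1 ≤ n) {σ τ : ℕ × ℕ → ℕ} (hσ : IsFilling n μ σ)
    (hna : NonAttacking n μ (augOf σ))
    (hπ : ∀ u : ℕ × ℕ, augIn n μ u → augOf τ (piBox n u) = piVal n (augOf σ u))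
    {u v : ℕ × ℕ} (hu : dgIn n μ u) (hv : armIn n μ u v) :
    (chi (augOf τ) (piBox n u) (piBox n v) + chi (augOf τ) (piBox n v) (dbox (piBox n u)) =
      chi (augOf τ) (piBox n u) (dbox (piBox n u))) ↔
    (chi (augOf σ) u v + chi (augOf σ) v (dbox u) = chi (augOf σ) u (dbox u)) := by
  have hva : augIn n μ v := armIn_augIn hv
  have hua : augIn n μ u := hu.augIn
  have hwa : augIn n μ (dbox u) := augIn_dbox hu
  obtain ⟨huv, hvw, huw⟩ := armIn_rlt hu hv
  obtain ⟨hat1, hat2⟩ := armIn_attacks hu hv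
  have hpuv : rlt (piBox n u) (piBox n v) :=
    (rlt_piBox ⟨hua.1, hua.2.1⟩ ⟨hva.1, hva.2.1⟩).mpr huv
  have hpvw : rlt (piBox n v) (piBox n (dbox u)) :=
    (rlt_piBox ⟨hva.1, hva.2.1⟩ ⟨hwa.1, hwa.2.1⟩).mpr hvw
  have hpuw : rlt (piBox n u) (piBox n (dbox u)) :=
    (rlt_piBox ⟨hua.1, hua.2.1⟩ ⟨hwa.1, hwa.2.1⟩).mpr huw
  rw [dbox_piBox hu.2.2.1]
  rw [chi_of_rlt hpuv, chi_of_rlt hpvw, chi_of_rlt hpuw,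
    chi_of_rlt huv, chi_of_rlt hvw, chi_of_rlt huw,
    hπ u hua, hπ v hva, hπ _ hwa]
  exact piVal_cond (augOf_bound hσ hua) (augOf_bound hσ hva) (augOf_bound hσ hwa)
    (hna u v hua hva hat1) (hna v (dbox u) hva hwa hat2)

end Helpers



/-- if `σ` is a non-attacking filling of `μ` and `τ` is the filling
`^πσ` of `π(μ)` (i.e. its augmented filling satisfies
`τ̂(π(u)) = π(σ̂(u))` for all `u` in the augmented diagram of `μ`), then
`coinv(τ̂) = coinv(σ̂)` and `maj(τ̂) = maj(σ̂) + μ_n - |σ⁻¹({n})|`. -/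
theorem pi_filling_stats (n : ℕ) (μ : ℕ → ℕ) (hn : 1 ≤ n) (σ τ : ℕ × ℕ → ℕ)
    (hσ : IsFilling n μ σ) (hna : NonAttacking n μ (augOf σ))
    (hτ : IsFilling n (piComp n μ) τ)
    (hπ : ∀ u : ℕ × ℕ, augIn n μ u →
      augOf τ (piBox n u) = piVal n (augOf σ u)) :
    coinvStat n (piComp n μ) (augOf τ) = coinvStat n μ (augOf σ) ∧
    (majStat n (piComp n μ) (augOf τ) : ℤ) =
      (majStat n μ (augOf σ) : ℤ) + (μ n : ℤ) -
        (((dgF n μ).filter (fun u => σ u = n)).card : ℤ) := by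
  -- values of τ̂ at the special boxes
  have hσn0 : augOf σ (n, 0) = n := by simp [augOf]
  have ht10 : augOf τ ((1 : ℕ), (0 : ℕ)) = 1 := by simp [augOf]
  have ht11 : augOf τ ((1 : ℕ), (1 : ℕ)) = 1 := by
    have h := hπ (n, 0) ⟨hn, le_refl n, Nat.zero_le _⟩
    rw [piBox_ge (lt_irrefl n), hσn0] at h
    rw [show ((1 : ℕ), (0 : ℕ) + 1) = ((1 : ℕ), (1 : ℕ)) from rfl] at h
    rw [h]
    simp [piVal]
  constructor
  · -- coinv part
    unfold coinvStat
    have himg : coinvTriplesF n (piComp n μ) (augOf τ) =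
        (coinvTriplesF n μ (augOf σ)).image (fun p => (piBox n p.1, piBox n p.2)) := by
      ext p
      obtain ⟨p1, p2⟩ := p
      simp only [Finset.mem_image]
      constructor
      · intro hp
        simp only [coinvTriplesF, triplesF, Finset.mem_filter, Finset.mem_product,
          mem_dgF, mem_augF] at hp
        obtain ⟨⟨⟨hp1, hp2⟩, harm⟩, hchi⟩ := hp
        by_cases h11 : p1 = (1, 1)
        · exfalso
          subst h11
          -- the arm of (1,1) consists of boxes (c,0) with c > 1
          have hc : p2.2 = 0 ∧ 1 < p2.1 := by
            rcases harm with ⟨hd, -, hlt, -⟩ | ⟨-, he, hlt, -⟩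
            · have hlt' : p2.1 < 1 := hlt
              have := hd.1
              omega
            · have he' : p2.2 + 1 = 1 := he
              have hlt' : 1 < p2.1 := hlt
              omega
          have hp2eq : p2 = (p2.1, 0) := prodEq rfl hc.1
          rw [hp2eq] at hchi
          rw [show dbox ((1 : ℕ), (1 : ℕ)) = ((1 : ℕ), (0 : ℕ)) from rfl] at hchi
          have htc : augOf τ (p2.1, 0) = p2.1 := by simp [augOf]
          have r1 : rlt ((1 : ℕ), (1 : ℕ)) (p2.1, 0) := Or.inl Nat.zero_lt_one
          have r2 : rlt (p2.1, 0) ((1 : ℕ), (0 : ℕ)) := Or.inr ⟨rfl, hc.2⟩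
          have r3 : rlt ((1 : ℕ), (1 : ℕ)) ((1 : ℕ), (0 : ℕ)) := Or.inl Nat.zero_lt_one
          rw [chi_of_rlt r1, chi_of_rlt r2, chi_of_rlt r3, ht10, ht11, htc] at hchi
          split_ifs at hchi <;> omega
        · obtain ⟨u, hu, hpu⟩ := piBox_surj_dg hp1 h11
          subst hpu
          have hne10 : p2 ≠ (1, 0) := armIn_ne10 hp1 harm
          obtain ⟨v, hv, hpv⟩ := piBox_surj hp2 hne10
          subst hpv
          have harm' : armIn n μ u v := (armIn_piBox hu hv).mp harm
          refine ⟨(u, v), ?_, rfl⟩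
          simp only [coinvTriplesF, triplesF, Finset.mem_filter, Finset.mem_product,
            mem_dgF, mem_augF]
          exact ⟨⟨⟨hu, hv⟩, harm'⟩, (triple_equiv hn hσ hna hπ hu harm').mp hchi⟩
      · rintro ⟨⟨u, v⟩, hq, heq⟩
        simp only [coinvTriplesF, triplesF, Finset.mem_filter, Finset.mem_product,
          mem_dgF, mem_augF] at hq
        obtain ⟨⟨⟨hu, hv⟩, harm⟩, hchi⟩ := hq
        rw [Prod.mk.injEq] at heq
        obtain ⟨h1, h2⟩ := heq
        subst h1; subst h2
        simp only [coinvTriplesF, triplesF, Finset.mem_filter, Finset.mem_product,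
          mem_dgF, mem_augF]
        exact ⟨⟨⟨dgIn_piBox hu, augIn_piBox hv⟩, (armIn_piBox hu hv).mpr harm⟩,
          (triple_equiv hn hσ hna hπ hu harm).mpr hchi⟩
    rw [himg, Finset.card_image_of_injOn]
    intro p hp q hq heq
    simp only [Finset.coe_filter, coinvTriplesF, triplesF, Finset.mem_filter,
      Finset.mem_product, mem_dgF, mem_augF, Set.mem_setOf_eq] at hp hq
    obtain ⟨⟨⟨hpu, hpv⟩, -⟩, -⟩ := hp
    obtain ⟨⟨⟨hqu, hqv⟩, -⟩, -⟩ := hq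
    rw [Prod.mk.injEq] at heq
    exact prodEq (piBox_inj ⟨hpu.1, hpu.2.1⟩ ⟨hqu.1, hqu.2.1⟩ heq.1)
      (piBox_inj ⟨hpv.1, hpv.2.1⟩ ⟨hqv.1, hqv.2.1⟩ heq.2)
  · -- maj part
    have h11mem : ((1 : ℕ), (1 : ℕ)) ∉ (dgF n μ).image (piBox n) := by
      simp only [Finset.mem_image, mem_dgF]
      rintro ⟨u, hu, heq⟩
      obtain ⟨i, j⟩ := u
      simp only [dgIn] at hu
      by_cases hi : i < n
      · rw [piBox_lt hi, Prod.mk.injEq] at heq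
        omega
      · rw [piBox_ge hi, Prod.mk.injEq] at heq
        omega
    have hmaj1 : majStat n (piComp n μ) (augOf τ) = ∑ u ∈ dgF n μ,
        (if augOf τ (dbox (piBox n u)) < augOf τ (piBox n u)
          then legLen (piComp n μ) (piBox n u) + 1 else 0) := by
      unfold majStat desF
      rw [Finset.sum_filter, dgF_pi hn, Finset.sum_insert h11mem,
        Finset.sum_image (fun a ha b hb h =>
          piBox_inj ⟨(mem_dgF.mp ha).1, (mem_dgF.mp ha).2.1⟩
            ⟨(mem_dgF.mp hb).1, (mem_dgF.mp hb).2.1⟩ h)]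
      rw [if_neg, zero_add]
      rw [show dbox ((1 : ℕ), (1 : ℕ)) = ((1 : ℕ), (0 : ℕ)) from rfl, ht10, ht11]
      omega
    have hmaj2 : majStat n (piComp n μ) (augOf τ) = ∑ u ∈ dgF n μ,
        (if piVal n (augOf σ (dbox u)) < piVal n (augOf σ u) then legLen μ u + 1 else 0) := by
      rw [hmaj1]
      apply Finset.sum_congr rfl
      intro u hu
      rw [mem_dgF] at hu
      rw [dbox_piBox hu.2.2.1, hπ u hu.augIn, hπ _ (augIn_dbox hu), legLen_piBox hu.1 hu.2.1]
    have hmaj3 : majStat n (piComp n μ) (augOf τ)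
          + ∑ u ∈ dgF n μ, (if augOf σ u = n then legLen μ u + 1 else 0)
        = majStat n μ (augOf σ)
          + ∑ u ∈ dgF n μ, (if augOf σ (dbox u) = n then legLen μ u + 1 else 0) := by
      rw [hmaj2]
      unfold majStat desF
      rw [Finset.sum_filter, ← Finset.sum_add_distrib, ← Finset.sum_add_distrib]
      apply Finset.sum_congr rfl
      intro u hu
      rw [mem_dgF] at hu
      obtain ⟨hx1, hx2⟩ := augOf_bound hσ hu.augIn
      obtain ⟨hz1, hz2⟩ := augOf_bound hσ (augIn_dbox hu)
      simp only [piVal]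
      split_ifs <;> omega
    -- the sum over boxes whose lower box carries n
    have hA : ∑ u ∈ dgF n μ, (if augOf σ (dbox u) = n then legLen μ u + 1 else 0)
        = ∑ v ∈ (augF n μ).filter (fun v => augOf σ v = n ∧ v.2 < μ v.1), (μ v.1 - v.2) := by
      rw [← Finset.sum_filter]
      refine Finset.sum_nbij' (fun u => dbox u) (fun v => (v.1, v.2 + 1)) ?_ ?_ ?_ ?_ ?_
      · intro a ha
        simp only [Finset.mem_filter, mem_dgF] at ha
        simp only [Finset.mem_filter, mem_augF]
        obtain ⟨had, haeq⟩ := ha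
        obtain ⟨q1, q2, q3, q4⟩ := had
        exact ⟨⟨q1, q2, le_trans (Nat.sub_le _ _) q4⟩, haeq,
          show a.2 - 1 < μ a.1 by omega⟩
      · intro v hv
        simp only [Finset.mem_filter, mem_augF] at hv
        simp only [Finset.mem_filter, mem_dgF]
        obtain ⟨⟨q1, q2, q3⟩, hveq, hvlt⟩ := hv
        refine ⟨⟨q1, q2, Nat.le_add_left 1 v.2, show v.2 + 1 ≤ μ v.1 by omega⟩, ?_⟩
        have hd : dbox (v.1, v.2 + 1) = v := by simp [dbox]
        rw [hd]
        exact hveq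
      · intro a ha
        simp only [Finset.mem_filter, mem_dgF] at ha
        exact prodEq rfl (by have := ha.1.2.2.1; simp only [dbox]; omega)
      · intro v hv
        simp [dbox]
      · intro a ha
        simp only [Finset.mem_filter, mem_dgF] at ha
        have h1 := ha.1.2.2.1
        have h2 := ha.1.2.2.2
        show legLen μ a + 1 = μ a.1 - (a.2 - 1)
        unfold legLen
        omega
    have hS0 : (augF n μ).filter (fun v => augOf σ v = n ∧ v.2 < μ v.1)
        ⊆ (augF n μ).filter (fun v => augOf σ v = n) := by
      intro v hv
      simp only [Finset.mem_filter] at hv ⊢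
      exact ⟨hv.1, hv.2.1⟩
    have hA2 : ∑ v ∈ (augF n μ).filter (fun v => augOf σ v = n ∧ v.2 < μ v.1), (μ v.1 - v.2)
        = ∑ v ∈ (augF n μ).filter (fun v => augOf σ v = n), (μ v.1 - v.2) := by
      apply Finset.sum_subset hS0
      intro v hv hnv
      obtain ⟨hva, hveq⟩ := Finset.mem_filter.mp hv
      have hlt : ¬ v.2 < μ v.1 := fun hc => hnv (Finset.mem_filter.mpr ⟨hva, hveq, hc⟩)
      omega
    have hS0eq : (augF n μ).filter (fun v => augOf σ v = n)
        = insert ((n : ℕ), (0 : ℕ)) ((dgF n μ).filter (fun v => augOf σ v = n)) := by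
      ext v
      simp only [Finset.mem_filter, Finset.mem_insert, mem_augF, mem_dgF]
      constructor
      · rintro ⟨hva, hveq⟩
        by_cases h0 : v.2 = 0
        · left
          have hv1 : augOf σ v = v.1 := by simp [augOf, h0]
          exact prodEq (by rw [hv1] at hveq; exact hveq) h0
        · exact Or.inr ⟨⟨hva.1, hva.2.1, by omega, hva.2.2⟩, hveq⟩
      · rintro (rfl | ⟨hvd, hveq⟩)
        · exact ⟨⟨hn, le_refl n, Nat.zero_le _⟩, by simp [augOf]⟩
        · exact ⟨hvd.augIn, hveq⟩
    have hn0 : ((n : ℕ), (0 : ℕ)) ∉ (dgF n μ).filter (fun v => augOf σ v = n) := by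
      simp only [Finset.mem_filter, mem_dgF]
      rintro ⟨h, -⟩
      exact absurd h.2.2.1 (by omega)
    have hA3 : ∑ v ∈ (augF n μ).filter (fun v => augOf σ v = n), (μ v.1 - v.2)
        = μ n + ∑ v ∈ (dgF n μ).filter (fun v => augOf σ v = n), (μ v.1 - v.2) := by
      rw [hS0eq, Finset.sum_insert hn0]
      simp
    have hB : ∑ u ∈ dgF n μ, (if augOf σ u = n then legLen μ u + 1 else 0)
        = (∑ v ∈ (dgF n μ).filter (fun v => augOf σ v = n), (μ v.1 - v.2))
          + ((dgF n μ).filter (fun v => augOf σ v = n)).card := by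
      rw [← Finset.sum_filter, Finset.sum_add_distrib, Finset.sum_const, smul_eq_mul, mul_one]
      rfl
    have hfilt : (dgF n μ).filter (fun u => σ u = n)
        = (dgF n μ).filter (fun u => augOf σ u = n) := by
      apply Finset.filter_congr
      intro u hu
      rw [mem_dgF] at hu
      have h0 : u.2 ≠ 0 := by have := hu.2.2.1; omega
      simp [augOf, h0]
    rw [hfilt]
    have := hmaj3
    rw [hA, hA2, hA3, hB] at this
    push_cast
    omega
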